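/- Let α = (1+√−7)/2 and let P be a Hermitian ℤ[α]-lattice of rank ≥ 2 with Hermitian minimum m. Then every free rank-2 ℤ[α]-sublattice of P has discriminant at least 3m²/7; i.e. d_2(P) ≥ 3m²/7. -/

import Mathlib

/-!
Every `z ∈ ℂ` lies within squared distance `4/7` of `ℤ[α]`: the lattice `ℤ[α]` is triangulated by
copies of the acute triangle `0, 1, α`, whose circumradius is `2/√7`. Given independent `x, y`, replacing `y` by
`y - q x` with `q ∈ ℤ[α]` nearest to `h(x,y)/h(x,x)` keeps the Gram determinant
`h(x,x) h(y,y) - |h(x,y)|²` and makes `|h(x,y)|² ≤ (4/7) h(x,x)²`. If now `h(y,y) ≥ h(x,x) ≥ m`, the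
determinant is at least `(3/7) h(x,x)² ≥ 3m²/7`; otherwise swap `x` and `y` and repeat. Since `G`
has entries in `ℚ(√−7)`, some `N > 0` makes every `N h(v,v)` with `v ∈ ℤ[α]ⁿ` a natural number,
so this descent terminates.
-/

open Matrix Complex
open scoped ComplexOrder

/-- α = (1+√−7)/2, a root of α² − α + 2 = 0, realized in ℂ. -/
noncomputable def α7 : ℂ := (1 + Complex.I * Real.sqrt 7) / 2

/-- The ring of integers ℤ[α] of ℚ(√−7), as a subset of ℂ. -/
noncomputable def O7 : Set ℂ := {z | ∃ a b : ℤ, z = (a : ℂ) + (b : ℂ) * α7}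

/-- ℚ(√−7) as a subset of ℂ. -/
noncomputable def K7 : Set ℂ := {z | ∃ u v : ℚ, z = (u : ℂ) + (v : ℂ) * (Complex.I * Real.sqrt 7)}

lemma I_mul_sqrt_seven : Complex.I * (Real.sqrt 7 : ℂ) = 2 * α7 - 1 := by
  unfold α7; ring

lemma α7_mul_self : α7 * α7 = α7 - 2 := by
  have h7 : ((Real.sqrt 7 : ℝ) : ℂ) ^ 2 = 7 := by
    norm_cast; exact Real.sq_sqrt (by norm_num)
  unfold α7
  linear_combination (Complex.I ^ 2 / 4) * h7 + (7 / 4 : ℂ) * Complex.I_sq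

lemma star_α7 : star α7 = 1 - α7 := by
  apply Complex.ext <;> simp [α7] <;> ring

lemma re_α7 : α7.re = 1 / 2 := by simp [α7]

lemma im_α7 : α7.im = Real.sqrt 7 / 2 := by simp [α7]

noncomputable def O7Subring : Subring ℂ where
  carrier := O7
  zero_mem' := ⟨0, 0, by simp⟩
  one_mem' := ⟨1, 0, by simp⟩
  add_mem' := by
    rintro _ _ ⟨a, b, rfl⟩ ⟨c, d, rfl⟩
    exact ⟨a + c, b + d, by push_cast; ring⟩
  neg_mem' := by
    rintro _ ⟨a, b, rfl⟩
    exact ⟨-a, -b, by push_cast; ring⟩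
  mul_mem' := by
    rintro _ _ ⟨a, b, rfl⟩ ⟨c, d, rfl⟩
    refine ⟨a * c - 2 * b * d, a * d + b * c + b * d, ?_⟩
    push_cast
    linear_combination (b * d : ℂ) * α7_mul_self

lemma star_mem_O7 {z : ℂ} (hz : z ∈ O7) : star z ∈ O7 := by
  obtain ⟨a, b, rfl⟩ := hz
  exact ⟨a + b, -b, by simp only [star_add, star_mul', star_intCast, star_α7]; push_cast; ring⟩

lemma exists_int_eq_of_mem_O7 {z : ℂ} (hz : z ∈ O7) (him : z.im = 0) : ∃ k : ℤ, z = k := by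
  obtain ⟨a, b, rfl⟩ := hz
  have hb : b = 0 := by
    simp only [add_im, intCast_im, mul_im, intCast_re, im_α7, re_α7, zero_mul, zero_add,
      add_zero] at him
    exact_mod_cast (mul_eq_zero.mp him).resolve_right (by positivity)
  exact ⟨a, by simp [hb]⟩

lemma exists_pos_nat_mul_mem_O7 {z : ℂ} (hz : z ∈ K7) : ∃ d : ℕ, 0 < d ∧ (d : ℂ) * z ∈ O7 := by
  obtain ⟨u, v, rfl⟩ := hz
  refine ⟨u.den * v.den, by positivity, u.num * v.den - v.num * u.den, 2 * v.num * u.den, ?_⟩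
  have hu : (u : ℂ) * u.den = u.num := by exact_mod_cast Rat.mul_den_eq_num u
  have hv : (v : ℂ) * v.den = v.num := by exact_mod_cast Rat.mul_den_eq_num v
  rw [I_mul_sqrt_seven]
  push_cast
  linear_combination (v.den : ℂ) * hu + (u.den * (2 * α7 - 1) : ℂ) * hv

lemma exists_pos_nat_forall_mul_mem_O7 {ι : Type*} [Fintype ι] {f : ι → ℂ} (hf : ∀ i, f i ∈ K7) :
    ∃ N : ℕ, 0 < N ∧ ∀ i, (N : ℂ) * f i ∈ O7 := by
  choose d hd0 hd using fun i => exists_pos_nat_mul_mem_O7 (hf i)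
  refine ⟨∏ i, d i, Finset.prod_pos fun i _ => hd0 i, fun i => ?_⟩
  obtain ⟨c, hc⟩ := Finset.dvd_prod_of_mem d (Finset.mem_univ i)
  rw [hc, Nat.cast_mul, mul_comm (d i : ℂ), mul_assoc]
  exact O7Subring.mul_mem (natCast_mem O7Subring c) (hd i)

lemma sq_add_seven_mul_sq_le_or {r t : ℝ} (hr₀ : 0 ≤ r) (hr : r ≤ 1 / 2) (ht₀ : 0 ≤ t)
    (ht : t ≤ 1 / 4) : r ^ 2 + 7 * t ^ 2 ≤ 4 / 7 ∨ (r - 1 / 2) ^ 2 + 7 * (t - 1 / 2) ^ 2 ≤ 4 / 7 := by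
  by_contra! ⟨h₁, h₂⟩
  nlinarith [mul_nonneg hr₀ (sub_nonneg.2 hr), mul_nonneg ht₀ (sub_nonneg.2 ht),
    mul_nonneg hr₀ ht₀, mul_nonneg (sub_nonneg.2 hr) (sub_nonneg.2 ht)]

lemma exists_int_sq_add_seven_mul_sq_le_of_abs_le {r t : ℝ} (hr : |r| ≤ 1 / 2) (ht : |t| ≤ 1 / 4) :
    ∃ a b : ℤ, (r - a - b / 2) ^ 2 + 7 * (t - b / 2) ^ 2 ≤ 4 / 7 := by
  rcases sq_add_seven_mul_sq_le_or (abs_nonneg r) hr (abs_nonneg t) ht with h | h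
  · exact ⟨0, 0, by simpa using h⟩
  rcases abs_cases r with ⟨hr', -⟩ | ⟨hr', -⟩ <;> rcases abs_cases t with ⟨ht', -⟩ | ⟨ht', -⟩ <;>
    rw [hr', ht'] at h
  · exact ⟨0, 1, by push_cast; linarith⟩
  · exact ⟨1, -1, by push_cast; linarith⟩
  · exact ⟨-1, 1, by push_cast; linarith⟩
  · exact ⟨0, -1, by push_cast; linarith⟩

/-- In the coordinates `z = s + t i√7`, the element `a + b α` is `(a + b/2) + (b/2) i√7`. -/
lemma exists_int_sq_add_seven_mul_sq_le (s t : ℝ) :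
    ∃ a b : ℤ, (s - a - b / 2) ^ 2 + 7 * (t - b / 2) ^ 2 ≤ 4 / 7 := by
  set b₀ := round (2 * t)
  set a₀ := round (s - b₀ / 2)
  have ht : |t - b₀ / 2| ≤ 1 / 4 := by
    have := abs_sub_round (2 * t)
    rw [show 2 * t - b₀ = 2 * (t - b₀ / 2) by ring, abs_mul, abs_two] at this
    linarith
  have hs : |s - a₀ - b₀ / 2| ≤ 1 / 2 := by
    rw [sub_right_comm]; exact abs_sub_round _
  obtain ⟨a, b, h⟩ := exists_int_sq_add_seven_mul_sq_le_of_abs_le hs ht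
  exact ⟨a₀ + a, b₀ + b, by push_cast; linarith⟩

lemma exists_mem_O7_normSq_sub_le (z : ℂ) : ∃ q ∈ O7, normSq (z - q) ≤ 4 / 7 := by
  obtain ⟨t, hz⟩ : ∃ t : ℝ, z.im = t * Real.sqrt 7 := ⟨z.im / Real.sqrt 7, by field_simp⟩
  have h7 : Real.sqrt 7 ^ 2 = 7 := Real.sq_sqrt (by norm_num)
  obtain ⟨a, b, hab⟩ := exists_int_sq_add_seven_mul_sq_le z.re t
  refine ⟨a + b * α7, ⟨a, b, rfl⟩, ?_⟩
  calc normSq (z - (a + b * α7)) = (z.re - a - b / 2) ^ 2 + 7 * (t - b / 2) ^ 2 := by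
        simp only [normSq_apply, sub_re, add_re, intCast_re, mul_re, intCast_im, re_α7, im_α7,
          sub_im, add_im, mul_im, hz]
        linear_combination (t - b / 2) ^ 2 * h7
    _ ≤ 4 / 7 := hab

section HermitianForm

variable {ι : Type*} [Fintype ι] {G : Matrix ι ι ℂ}

def gramDet (G : Matrix ι ι ℂ) (x y : ι → ℂ) : ℂ :=
  (star x ⬝ᵥ G *ᵥ x) * (star y ⬝ᵥ G *ᵥ y) - (star x ⬝ᵥ G *ᵥ y) * (star y ⬝ᵥ G *ᵥ x)

lemma gramDet_comm (G : Matrix ι ι ℂ) (x y : ι → ℂ) : gramDet G y x = gramDet G x y := by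
  unfold gramDet; ring

lemma gramDet_add_smul (G : Matrix ι ι ℂ) (x y : ι → ℂ) (c : ℂ) :
    gramDet G x (y + c • x) = gramDet G x y := by
  simp only [gramDet, mulVec_add, mulVec_smul, dotProduct_add, add_dotProduct, dotProduct_smul,
    smul_dotProduct, star_add, star_smul, smul_eq_mul]
  ring

lemma Matrix.IsHermitian.im_form (hG : G.IsHermitian) (x : ι → ℂ) :
    (star x ⬝ᵥ G *ᵥ x).im = 0 := by
  simpa using hG.im_star_dotProduct_mulVec_self x

lemma Matrix.IsHermitian.ofReal_re_form (hG : G.IsHermitian) (x : ι → ℂ) :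
    ((star x ⬝ᵥ G *ᵥ x).re : ℂ) = star x ⬝ᵥ G *ᵥ x :=
  Complex.ext rfl (hG.im_form x).symm

lemma Matrix.IsHermitian.star_form (hG : G.IsHermitian) (x y : ι → ℂ) :
    star (star x ⬝ᵥ G *ᵥ y) = star y ⬝ᵥ G *ᵥ x := by
  rw [star_dotProduct, star_mulVec, hG.eq, ← dotProduct_mulVec, star_star]

lemma Matrix.IsHermitian.re_gramDet (hG : G.IsHermitian) (x y : ι → ℂ) :
    (gramDet G x y).re =
      (star x ⬝ᵥ G *ᵥ x).re * (star y ⬝ᵥ G *ᵥ y).re - normSq (star x ⬝ᵥ G *ᵥ y) := by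
  rw [← ofReal_re (_ - _), ofReal_sub, ofReal_mul, hG.ofReal_re_form, hG.ofReal_re_form,
    ← mul_conj, ← Complex.star_def, hG.star_form, gramDet]

lemma natCast_mul_form_mem_O7 {N : ℕ} (hN : ∀ i j, (N : ℂ) * G i j ∈ O7) {x y : ι → ℂ}
    (hx : ∀ i, x i ∈ O7) (hy : ∀ i, y i ∈ O7) : (N : ℂ) * (star x ⬝ᵥ G *ᵥ y) ∈ O7 := by
  have : (N : ℂ) * (star x ⬝ᵥ G *ᵥ y) = ∑ i, ∑ j, star (x i) * ((N : ℂ) * G i j * y j) := by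
    simp only [dotProduct, mulVec, Pi.star_apply, Finset.mul_sum]
    exact Finset.sum_congr rfl fun i _ => Finset.sum_congr rfl fun j _ => by ring
  rw [this]
  exact O7Subring.sum_mem fun i _ => O7Subring.sum_mem fun j _ =>
    O7Subring.mul_mem (star_mem_O7 (hx i)) (O7Subring.mul_mem (hN i j) (hy j))

lemma exists_nat_eq_natCast_mul_re_form (hG : G.PosSemidef) {N : ℕ}
    (hN : ∀ i j, (N : ℂ) * G i j ∈ O7) {x : ι → ℂ} (hx : ∀ i, x i ∈ O7) :
    ∃ k : ℕ, (N : ℝ) * (star x ⬝ᵥ G *ᵥ x).re = k := by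
  obtain ⟨k, hk⟩ := exists_int_eq_of_mem_O7 (natCast_mul_form_mem_O7 hN hx hx)
    (by simp [hG.isHermitian.im_form x])
  have hk' : (N : ℝ) * (star x ⬝ᵥ G *ᵥ x).re = k := by simpa using congrArg Complex.re hk
  have hre : 0 ≤ (star x ⬝ᵥ G *ᵥ x).re := (Complex.nonneg_iff.mp (hG.dotProduct_mulVec_nonneg x)).1
  have hk₀ : (0 : ℝ) ≤ k := hk' ▸ mul_nonneg (Nat.cast_nonneg N) hre
  obtain ⟨k, rfl⟩ := Int.eq_ofNat_of_zero_le (by exact_mod_cast hk₀)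
  exact ⟨k, by simpa using hk'⟩

end HermitianForm

lemma exists_mem_O7_normSq_form_add_smul_le {ι : Type*} [Fintype ι] {G : Matrix ι ι ℂ}
    (hG : G.IsHermitian) {x : ι → ℂ} (hx : (star x ⬝ᵥ G *ᵥ x).re ≠ 0) (y : ι → ℂ) :
    ∃ q ∈ O7, normSq (star x ⬝ᵥ G *ᵥ (y + (-q) • x)) ≤ 4 / 7 * (star x ⬝ᵥ G *ᵥ x).re ^ 2 := by
  set A := (star x ⬝ᵥ G *ᵥ x).re
  obtain ⟨q, hq, hq'⟩ := exists_mem_O7_normSq_sub_le ((star x ⬝ᵥ G *ᵥ y) / (A : ℂ))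
  have hA : (A : ℂ) ≠ 0 := by exact_mod_cast hx
  have : star x ⬝ᵥ G *ᵥ (y + (-q) • x) = A * ((star x ⬝ᵥ G *ᵥ y) / A - q) := by
    rw [mulVec_add, mulVec_smul, dotProduct_add, dotProduct_smul, smul_eq_mul,
      ← hG.ofReal_re_form x]
    field_simp
    ring
  refine ⟨q, hq, ?_⟩
  rw [this, normSq_mul, normSq_ofReal]
  nlinarith [sq_nonneg A]

theorem three_mul_sq_div_seven_le_re_gramDet {ι : Type*} [Fintype ι] {G : Matrix ι ι ℂ}
    (hG : G.PosDef) {N : ℕ} (hN₀ : 0 < N) (hN : ∀ i j, (N : ℂ) * G i j ∈ O7) {m : ℝ}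
    (hm₀ : 0 ≤ m)
    (hm : m ∈ lowerBounds {r : ℝ | ∃ v : ι → ℂ, (∀ i, v i ∈ O7) ∧ v ≠ 0 ∧
      (star v ⬝ᵥ G *ᵥ v).re = r})
    {x y : ι → ℂ} (hx : ∀ i, x i ∈ O7) (hy : ∀ i, y i ∈ O7) (hxy : LinearIndependent ℂ ![x, y]) :
    3 * m ^ 2 / 7 ≤ (gramDet G x y).re := by
  obtain ⟨k, hk⟩ := exists_nat_eq_natCast_mul_re_form hG.posSemidef hN hx
  induction k using Nat.strong_induction_on generalizing x y with
  | _ k ih =>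
    have hx₀ : x ≠ 0 := by simpa using hxy.ne_zero 0
    have hmA : m ≤ (star x ⬝ᵥ G *ᵥ x).re := hm ⟨x, hx, hx₀, rfl⟩
    have hA : 0 < (star x ⬝ᵥ G *ᵥ x).re :=
      (Complex.lt_def.mp (hG.dotProduct_mulVec_pos hx₀)).1
    obtain ⟨q, hq, hxv⟩ := exists_mem_O7_normSq_form_add_smul_le hG.isHermitian hA.ne' y
    have hv : ∀ i, (y + (-q) • x) i ∈ O7 := fun i =>
      O7Subring.add_mem (hy i) (O7Subring.mul_mem (O7Subring.neg_mem hq) (hx i))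
    rw [← gramDet_add_smul G x y (-q)]
    rcases le_or_gt (star x ⬝ᵥ G *ᵥ x).re (star (y + (-q) • x) ⬝ᵥ G *ᵥ (y + (-q) • x)).re
      with hle | hlt
    · rw [hG.isHermitian.re_gramDet]
      nlinarith
    · obtain ⟨k', hk'⟩ := exists_nat_eq_natCast_mul_re_form hG.posSemidef hN hv
      have hk'k : k' < k := by
        have : (k' : ℝ) < k := by rw [← hk, ← hk']; exact mul_lt_mul_of_pos_left hlt (by positivity)
        exact_mod_cast this
      rw [← gramDet_comm]
      exact ih k' hk'k hv hx (by
        rwa [LinearIndependent.pair_add_smul_left_iff, LinearIndependent.pair_symm_iff]) hk'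

theorem stmt17_general (n : ℕ)
    (G : Matrix (Fin n) (Fin n) ℂ) (hGK : ∀ i j, G i j ∈ K7) (hG : G.PosDef)
    (m : ℝ)
    (hm : IsLeast {x : ℝ | ∃ v : Fin n → ℂ, (∀ i, v i ∈ O7) ∧ v ≠ 0 ∧
      (star v ⬝ᵥ G.mulVec v).re = x} m)
    (x : Fin 2 → Fin n → ℂ) (hxO : ∀ t i, x t i ∈ O7)
    (hxind : LinearIndependent ℂ x) :
    3 * m ^ 2 / 7 ≤ ((Matrix.of fun s t => star (x s) ⬝ᵥ G.mulVec (x t)).det).re := by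
  obtain ⟨N, hN₀, hN⟩ := exists_pos_nat_forall_mul_mem_O7 (f := fun p : Fin n × Fin n => G p.1 p.2)
    fun p => hGK p.1 p.2
  have hm₀ : 0 ≤ m := by
    obtain ⟨v, -, hv, rfl⟩ := hm.1
    exact (Complex.lt_def.mp (hG.dotProduct_mulVec_pos hv)).1.le
  have hx : LinearIndependent ℂ ![x 0, x 1] := by rwa [← FinVec.etaExpand_eq x] at hxind
  rw [det_fin_two]
  exact three_mul_sq_div_seven_le_re_gramDet hG hN₀ (fun i j => hN (i, j)) hm₀ hm.2
    (hxO 0) (hxO 1) hx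

/-- Let P be a Hermitian ℤ[α]-lattice of rank n ≥ 2 (given by the positive
definite Hermitian Gram matrix `G` of an ℤ[α]-basis, entries in ℚ(√−7)), with
Hermitian minimum m.  Then every free rank-2 ℤ[α]-sublattice of P (spanned by
two ℂ-linearly independent coordinate vectors with entries in ℤ[α]) has
discriminant (Gram determinant) at least 3m²/7; i.e. d_2(P) ≥ 3m²/7. -/
theorem stmt17 (n : ℕ) (hn : 2 ≤ n)
    (G : Matrix (Fin n) (Fin n) ℂ) (hGK : ∀ i j, G i j ∈ K7) (hG : G.PosDef)
    (m : ℝ)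
    (hm : IsLeast {x : ℝ | ∃ v : Fin n → ℂ, (∀ i, v i ∈ O7) ∧ v ≠ 0 ∧
      (star v ⬝ᵥ G.mulVec v).re = x} m)
    (x : Fin 2 → Fin n → ℂ) (hxO : ∀ t i, x t i ∈ O7)
    (hxind : LinearIndependent ℂ x) :
    3 * m ^ 2 / 7 ≤ ((Matrix.of fun s t => star (x s) ⬝ᵥ G.mulVec (x t)).det).re :=
  stmt17_general n G hGK hG m hm x hxO hxind
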